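/- There exists a constant C > 0 such that for every real k > 1 and every real s ≥ 0, both √(T_k(s)) ≤ C·(1 + √|g_k(s)|) and √(T_k(s)) ≤ C·h_k(s) hold. -/

import Mathlib

open Real intervalIntegral

/-- Truncation `T_k(s) = max(0, min(k, s))`. -/
noncomputable def Tk (k s : ℝ) : ℝ := max 0 (min k s)

/-- `g_k(s) = ∫₀ˢ (∫₁ʸ dz / T_k(z)) dy`. -/
noncomputable def gk (k s : ℝ) : ℝ := ∫ y in (0:ℝ)..s, ∫ z in (1:ℝ)..y, 1 / Tk k z

/-- `h_k(s) = ∫₀ˢ dz / √(T_k(z))`. -/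
noncomputable def hk (k s : ℝ) : ℝ := ∫ z in (0:ℝ)..s, 1 / Real.sqrt (Tk k z)

/-! Write `m = T_k(s) = min(k, s)`. Since `T_k` is monotone, the integrand of `h_k(s)` is at least
`1/√m` on `(0, s]`, so `h_k(s) ≥ s/√m ≥ √m`. Since `T_k(z) ≤ z`, the inner integral of `g_k`
dominates `log y`, so `g_k(s) ≥ ∫₀ˢ log = s log s - s ≥ s ≥ m` once `s ≥ e²`, while `√m ≤ e`
for smaller `s`. Hence `C = e` works. -/

open Set MeasureTheory

section Truncation

variable {k s : ℝ}

lemma Tk_of_nonneg (hk₀ : 0 ≤ k) (hs : 0 ≤ s) : Tk k s = min k s :=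
  max_eq_right (le_min hk₀ hs)

lemma Tk_of_le (hs : 0 ≤ s) (hsk : s ≤ k) : Tk k s = s := by
  rw [Tk_of_nonneg (hs.trans hsk) hs, min_eq_right hsk]

lemma Tk_pos (hk₀ : 0 < k) (hs : 0 < s) : 0 < Tk k s := by
  rw [Tk_of_nonneg hk₀.le hs.le]
  exact lt_min hk₀ hs

lemma Tk_le_self (hs : 0 ≤ s) : Tk k s ≤ s :=
  max_le hs (min_le_right k s)

lemma Tk_mono (k : ℝ) : Monotone (Tk k) :=
  fun _ _ h => max_le_max le_rfl (min_le_min le_rfl h)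

lemma continuous_Tk (k : ℝ) : Continuous (Tk k) := by
  unfold Tk
  fun_prop

lemma intervalIntegrable_one_div_Tk (hk₀ : 0 < k) {a b : ℝ} (ha : 0 < a) (hb : 0 < b) :
    IntervalIntegrable (fun z => 1 / Tk k z) volume a b := by
  refine (continuousOn_const.div (continuous_Tk k).continuousOn fun z hz => ?_).intervalIntegrable
  exact (Tk_pos hk₀ (lt_of_lt_of_le (lt_min ha hb) hz.1)).ne'

end Truncation

section LowerBounds

variable {k s y : ℝ}

lemma integral_one_div_Tk_of_le (hk₁ : 1 ≤ k) (hy : 0 < y) (hyk : y ≤ k) :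
    ∫ z in (1:ℝ)..y, 1 / Tk k z = log y := by
  have hpos : ∀ z ∈ uIcc 1 y, 0 < z := fun z hz => lt_of_lt_of_le (lt_min one_pos hy) hz.1
  rw [integral_congr (g := fun z => 1 / z) fun z hz => ?_,
    integral_one_div fun h => (hpos 0 h).false, div_one]
  dsimp only
  rw [Tk_of_le (hpos z hz).le (hz.2.trans (max_le hk₁ hyk))]

lemma log_le_integral_one_div_Tk (hk₁ : 1 ≤ k) (hy : 0 < y) :
    log y ≤ ∫ z in (1:ℝ)..y, 1 / Tk k z := by
  rcases le_total y 1 with hy1 | hy1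
  · exact (integral_one_div_Tk_of_le hk₁ hy (hy1.trans hk₁)).ge
  have hk₀ : 0 < k := one_pos.trans_le hk₁
  have hpos : ∀ z ∈ uIcc 1 y, 0 < z := fun z hz => lt_of_lt_of_le (lt_min one_pos hy) hz.1
  have hinv : IntervalIntegrable (fun z => 1 / z) volume 1 y :=
    (continuousOn_const.div continuousOn_id fun z hz => (hpos z hz).ne').intervalIntegrable
  calc log y = ∫ z in (1:ℝ)..y, 1 / z := by
        rw [integral_one_div fun h => (hpos 0 h).false, div_one]
    _ ≤ ∫ z in (1:ℝ)..y, 1 / Tk k z :=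
        integral_mono_on hy1 hinv (intervalIntegrable_one_div_Tk hk₀ one_pos hy) fun z hz =>
          have hz₀ := hpos z (Icc_subset_uIcc hz)
          one_div_le_one_div_of_le (Tk_pos hk₀ hz₀) (Tk_le_self hz₀.le)

lemma intervalIntegrable_integral_one_div_Tk (hk₁ : 1 ≤ k) (hs : 1 ≤ s) :
    IntervalIntegrable (fun y => ∫ z in (1:ℝ)..y, 1 / Tk k z) volume 0 s := by
  have hlog : IntervalIntegrable (fun y => ∫ z in (1:ℝ)..y, 1 / Tk k z) volume 0 1 :=
    intervalIntegrable_log'.congr_uIoo fun y hy => by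
      rw [uIoo_of_le zero_le_one] at hy
      exact (integral_one_div_Tk_of_le hk₁ hy.1 (hy.2.le.trans hk₁)).symm
  refine hlog.trans (ContinuousOn.intervalIntegrable ?_)
  exact continuousOn_primitive_interval'
    (intervalIntegrable_one_div_Tk (one_pos.trans_le hk₁) one_pos (one_pos.trans_le hs))
    left_mem_uIcc

lemma mul_log_sub_le_gk (hk₁ : 1 ≤ k) (hs : 1 ≤ s) : s * log s - s ≤ gk k s :=
  calc s * log s - s = ∫ y in (0:ℝ)..s, log y := by rw [integral_log]; simp
    _ ≤ gk k s := integral_mono_on_of_le_Ioo (by linarith) intervalIntegrable_log'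
        (intervalIntegrable_integral_one_div_Tk hk₁ hs) fun y hy =>
        log_le_integral_one_div_Tk hk₁ hy.1

lemma intervalIntegrable_one_div_sqrt_Tk (hk₀ : 0 < k) (hs : 0 ≤ s) :
    IntervalIntegrable (fun z => 1 / √(Tk k z)) volume 0 s := by
  have hsqrt : IntervalIntegrable (fun z => 1 / √z) volume 0 s :=
    (intervalIntegrable_rpow' (r := -(1 / 2)) (by norm_num)).congr_uIoo fun z hz => by
      rw [uIoo_of_le hs] at hz
      dsimp only
      rw [rpow_neg hz.1.le, sqrt_eq_rpow, one_div, one_div]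
  refine (hsqrt.add (intervalIntegrable_const (c := 1 / √k))).mono_fun
    ((continuous_Tk k).measurable.sqrt.const_div 1).aestronglyMeasurable ?_
  filter_upwards [ae_restrict_mem measurableSet_uIoc] with z hz
  rw [uIoc_of_le hs] at hz
  simp only [norm_eq_abs]
  rw [abs_of_nonneg (by positivity), abs_of_nonneg (by positivity), Tk_of_nonneg hk₀.le hz.1.le]
  rcases le_total k z with hkz | hzk
  · rw [min_eq_left hkz]
    exact le_add_of_nonneg_left (by positivity)
  · rw [min_eq_right hzk]
    exact le_add_of_nonneg_right (by positivity)

lemma sqrt_Tk_le_hk (hk₀ : 0 < k) (hs : 0 ≤ s) : √(Tk k s) ≤ hk k s := by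
  rcases hs.eq_or_lt with rfl | hs
  · simp [Tk, hk]
  calc √(Tk k s) = Tk k s / √(Tk k s) := (div_sqrt).symm
    _ ≤ s / √(Tk k s) := by gcongr; exact Tk_le_self hs.le
    _ = ∫ _ in (0:ℝ)..s, 1 / √(Tk k s) := by
        rw [intervalIntegral.integral_const, smul_eq_mul, sub_zero, mul_one_div]
    _ ≤ hk k s := integral_mono_on_of_le_Ioo hs.le intervalIntegrable_const
        (intervalIntegrable_one_div_sqrt_Tk hk₀ hs.le) fun z hz =>
        one_div_le_one_div_of_le (sqrt_pos.2 (Tk_pos hk₀ hz.1))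
          (sqrt_le_sqrt (Tk_mono k hz.2.le))

end LowerBounds

theorem stmt_5 :
    ∃ C : ℝ, 0 < C ∧ ∀ k : ℝ, 1 < k → ∀ s : ℝ, 0 ≤ s →
      Real.sqrt (Tk k s) ≤ C * (1 + Real.sqrt |gk k s|) ∧
      Real.sqrt (Tk k s) ≤ C * hk k s := by
  refine ⟨exp 1, exp_pos 1, fun k hk₁ s hs => ⟨?_, ?_⟩⟩
  · rcases le_total s (exp 2) with hs2 | hs2
    · calc √(Tk k s) ≤ √(exp 2) := sqrt_le_sqrt ((Tk_le_self hs).trans hs2)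
        _ = exp 1 := by rw [← sqrt_sq (exp_pos 1).le, ← exp_nat_mul]; norm_num
        _ ≤ exp 1 * (1 + √|gk k s|) :=
          le_mul_of_one_le_right (exp_pos 1).le (le_add_of_nonneg_right (sqrt_nonneg _))
    · have hlog : 2 ≤ log s := (le_log_iff_exp_le ((exp_pos 2).trans_le hs2)).2 hs2
      have hg : Tk k s ≤ |gk k s| :=
        calc Tk k s ≤ s := Tk_le_self hs
          _ ≤ s * log s - s := by nlinarith
          _ ≤ gk k s := mul_log_sub_le_gk hk₁.le ((one_le_exp zero_le_two).trans hs2)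
          _ ≤ |gk k s| := le_abs_self _
      calc √(Tk k s) ≤ √|gk k s| := sqrt_le_sqrt hg
        _ ≤ exp 1 * (1 + √|gk k s|) := by nlinarith [sqrt_nonneg |gk k s|, add_one_le_exp 1]
  · have h := sqrt_Tk_le_hk (zero_lt_one.trans hk₁) hs
    exact h.trans (le_mul_of_one_le_left ((sqrt_nonneg _).trans h) (one_le_exp zero_le_one))
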